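/- arXiv:2512.10400 — 2 statements merged into one kernel-verified Lean document; each statement's English description precedes it below -/
import Mathlib

section
/- Let β be a nonzero complex number such that β² is not a rational number, and let σ ∈ ℂ be such that 2σ ∉ {kβ + lβ⁻¹ : k, l ∈ ℤ}. Then for σ′ ∈ ℂ, the two equalities cos(2πβ⁻¹σ′) = cos(2πβ⁻¹σ) and cos(2πβσ′) = cos(2πβσ) hold simultaneously if and only if σ′ = σ or σ′ = −σ. (Hence imposing both shift equations, from V^d_{⟨1,2⟩} and V^d_{⟨2,1⟩}, determines the disc one-point function sin(4πσP) uniquely up to a P-independent prefactor.) -/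
noncomputable def PI : ℂ := Real.pi

lemma beta_int_aux (β : ℂ) (hβ : β ≠ 0) (hirr : ∀ q : ℚ, β ^ 2 ≠ (q : ℂ))
    (k l : ℤ) (h : (k : ℂ) * β = (l : ℂ) * β⁻¹) : (k : ℂ) = 0 ∧ (l : ℂ) = 0 := by
  have hb : β⁻¹ * β = 1 := inv_mul_cancel₀ hβ
  have hsq : (k : ℂ) * β ^ 2 = l := by linear_combination β * h + (l : ℂ) * hb
  rcases eq_or_ne (k : ℤ) 0 with hk | hk
  · subst hk
    simp only [Int.cast_zero, zero_mul] at hsq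
    exact ⟨by simp, hsq.symm⟩
  · exfalso
    apply hirr ((l : ℚ) / (k : ℚ))
    have hk' : (k : ℂ) ≠ 0 := by exact_mod_cast hk
    have hcast : (((l : ℚ) / (k : ℚ) : ℚ) : ℂ) = (l : ℂ) / (k : ℂ) := by push_cast; ring
    rw [hcast, eq_div_iff hk']
    linear_combination hsq

/-- For generic `β` (with `β²` irrational) and generic `σ`
(with `2σ ∉ βℤ + β⁻¹ℤ`), imposing both shift equations determines the boundary
parameter up to sign: `cos(2πβ⁻¹σ') = cos(2πβ⁻¹σ)` and `cos(2πβσ') = cos(2πβσ)`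
hold simultaneously iff `σ' = ±σ`. -/
theorem two_shift_equations_determine_sigma (β σ : ℂ) (hβ : β ≠ 0)
    (hirr : ∀ q : ℚ, β ^ 2 ≠ (q : ℂ))
    (hgen : ∀ k l : ℤ, 2 * σ ≠ (k : ℂ) * β + (l : ℂ) * β⁻¹) (σ' : ℂ) :
    (Complex.cos (2 * PI * β⁻¹ * σ') = Complex.cos (2 * PI * β⁻¹ * σ) ∧
        Complex.cos (2 * PI * β * σ') = Complex.cos (2 * PI * β * σ)) ↔
      (σ' = σ ∨ σ' = -σ) := by
  have hπ : (Real.pi : ℂ) ≠ 0 := by exact_mod_cast Real.pi_ne_zero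
  have hbb : β⁻¹ * β = 1 := inv_mul_cancel₀ hβ
  have hc1 : (2 * (Real.pi : ℂ) * β⁻¹) ≠ 0 :=
    mul_ne_zero (mul_ne_zero two_ne_zero hπ) (inv_ne_zero hβ)
  have hc2 : (2 * (Real.pi : ℂ) * β) ≠ 0 := mul_ne_zero (mul_ne_zero two_ne_zero hπ) hβ
  constructor
  · rintro ⟨h1, h2⟩
    unfold PI at h1 h2
    rw [Complex.cos_eq_cos_iff] at h1 h2
    obtain ⟨k, hk⟩ := h1
    obtain ⟨l, hl⟩ := h2
    have key1 : σ - σ' = (k : ℂ) * β ∨ σ + σ' = (k : ℂ) * β := by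
      rcases hk with h | h
      · left
        apply mul_left_cancel₀ hc1
        linear_combination h - 2 * (Real.pi : ℂ) * (k : ℂ) * hbb
      · right
        apply mul_left_cancel₀ hc1
        linear_combination h - 2 * (Real.pi : ℂ) * (k : ℂ) * hbb
    have key2 : σ - σ' = (l : ℂ) * β⁻¹ ∨ σ + σ' = (l : ℂ) * β⁻¹ := by
      rcases hl with h | h
      · left
        apply mul_left_cancel₀ hc2
        linear_combination h - 2 * (Real.pi : ℂ) * (l : ℂ) * hbb
      · right
        apply mul_left_cancel₀ hc2
        linear_combination h - 2 * (Real.pi : ℂ) * (l : ℂ) * hbb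
    rcases key1 with h1 | h1 <;> rcases key2 with h2 | h2
    · left
      obtain ⟨hk0, -⟩ := beta_int_aux β hβ hirr k l (by rw [← h1, ← h2])
      have h0 : σ - σ' = 0 := by rw [h1, hk0, zero_mul]
      linear_combination -h0
    · exact absurd (by linear_combination h1 + h2) (hgen k l)
    · exact absurd (by linear_combination h1 + h2) (hgen k l)
    · right
      obtain ⟨hk0, -⟩ := beta_int_aux β hβ hirr k l (by rw [← h1, ← h2])
      have h0 : σ + σ' = 0 := by rw [h1, hk0, zero_mul]
      linear_combination h0
  · rintro (rfl | rfl)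
    · exact ⟨rfl, rfl⟩
    · constructor
      · rw [show 2 * PI * β⁻¹ * -σ = -(2 * PI * β⁻¹ * σ) by ring, Complex.cos_neg]
      · rw [show 2 * PI * β * -σ = -(2 * PI * β * σ) by ring, Complex.cos_neg]
end

section
/- Let β be a nonzero complex number, m and n integers, and P ∈ ℂ. Then 2(−1)^m·cos(πnβ⁻²)·sin(2πβmP)·sin(2πβ⁻¹nP) = sin(2πβm(P+1/(2β)))·sin(2πβ⁻¹n(P+1/(2β))) + sin(2πβm(P−1/(2β)))·sin(2πβ⁻¹n(P−1/(2β))). (Thus the Liouville ZZ disc one-point function ⟨V_P⟩_{(m,n)} = sin(2πβmP)sin(2πβ⁻¹nP) solves the shift equation μ⟨V_P⟩ = Σ_± ⟨V_{P±1/(2β)}⟩ with μ_{(m,n)} = 2(−1)^m cos(πβ⁻²n).) -/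
lemma csin_add_int_mul_pi (x : ℂ) (n : ℤ) :
    Complex.sin (x + n * (Real.pi : ℂ)) = (-1) ^ n * Complex.sin x :=
  n.cast_negOnePow ℂ ▸ Complex.sin_antiperiodic.add_int_mul_eq n

lemma csin_sub_int_mul_pi (x : ℂ) (n : ℤ) :
    Complex.sin (x - n * (Real.pi : ℂ)) = (-1) ^ n * Complex.sin x :=
  n.cast_negOnePow ℂ ▸ Complex.sin_antiperiodic.sub_int_mul_eq n

/-- The Liouville ZZ disc one-point function
`⟨V_P⟩_{(m,n)} = sin(2πβmP) sin(2πβ⁻¹nP)` solves the shift equation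
`μ ⟨V_P⟩ = Σ_± ⟨V_{P±1/(2β)}⟩` with `μ_{(m,n)} = 2(−1)^m cos(πβ⁻²n)`. -/
theorem zz_one_point_shift_equation (β : ℂ) (hβ : β ≠ 0) (m n : ℤ) (P : ℂ) :
    2 * (-1 : ℂ) ^ m * Complex.cos (PI * (n : ℂ) * (β ^ 2)⁻¹) *
        (Complex.sin (2 * PI * β * (m : ℂ) * P) *
          Complex.sin (2 * PI * β⁻¹ * (n : ℂ) * P)) =
      Complex.sin (2 * PI * β * (m : ℂ) * (P + 1 / (2 * β))) *
          Complex.sin (2 * PI * β⁻¹ * (n : ℂ) * (P + 1 / (2 * β))) +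
        Complex.sin (2 * PI * β * (m : ℂ) * (P - 1 / (2 * β))) *
          Complex.sin (2 * PI * β⁻¹ * (n : ℂ) * (P - 1 / (2 * β))) := by
  have h1 : 2 * PI * β * (m : ℂ) * (P + 1 / (2 * β))
      = 2 * PI * β * (m : ℂ) * P + (m : ℂ) * (Real.pi : ℂ) := by
    unfold PI; field_simp
  have h2 : 2 * PI * β * (m : ℂ) * (P - 1 / (2 * β))
      = 2 * PI * β * (m : ℂ) * P - (m : ℂ) * (Real.pi : ℂ) := by
    unfold PI; field_simp
  have h3 : 2 * PI * β⁻¹ * (n : ℂ) * (P + 1 / (2 * β))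
      = 2 * PI * β⁻¹ * (n : ℂ) * P + PI * (n : ℂ) * (β ^ 2)⁻¹ := by
    unfold PI; field_simp
  have h4 : 2 * PI * β⁻¹ * (n : ℂ) * (P - 1 / (2 * β))
      = 2 * PI * β⁻¹ * (n : ℂ) * P - PI * (n : ℂ) * (β ^ 2)⁻¹ := by
    unfold PI; field_simp
  rw [h1, h2, h3, h4, csin_add_int_mul_pi, csin_sub_int_mul_pi,
    Complex.sin_add, Complex.sin_sub]
  ring
end
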